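/- Let G be a graph on n vertices, let X and Y be disjoint subsets of V(G) such that at least one X–Y separator exists, and let k > 0 be an integer. Then the number of important X–Y separators of G of excess at most k is at most ∑_{i=0}^{k} C(n,i). -/

import Mathlib

variable {V : Type*}

/-- `K` is an `X`–`Y` separator of `G`: `K` avoids `X ∪ Y` and every walk
from a vertex of `X` to a vertex of `Y` meets `K` (i.e. there is no
`X`–`Y` path in `G \ K`). -/
def IsSeparator (G : SimpleGraph V) (X Y K : Set V) : Prop :=
  K ⊆ (X ∪ Y)ᶜ ∧
  ∀ x ∈ X, ∀ y ∈ Y, ∀ w : G.Walk x y, ∃ v ∈ w.support, v ∈ K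

/-- `NR G A B`: the vertices of `G \ B` that are not reachable from `A` in `G \ B`. -/
def NR (G : SimpleGraph V) (A B : Set V) : Set V :=
  {v | v ∉ B ∧ ¬ ∃ a ∈ A, ∃ w : G.Walk a v, ∀ x ∈ w.support, x ∉ B}

/-- `Reach G A B`: the vertices reachable from `A` in `G \ B`. -/
def Reach (G : SimpleGraph V) (A B : Set V) : Set V :=
  {v | ∃ a ∈ A, ∃ w : G.Walk a v, ∀ x ∈ w.support, x ∉ B}

/-- The order on `X`–`Y` separators: `K1 ≤ K2` iff `NR(G,Y,K1) ⊆ NR(G,Y,K2)`. -/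
def SepLE (G : SimpleGraph V) (Y K1 K2 : Set V) : Prop :=
  NR G Y K1 ⊆ NR G Y K2

/-- The strict order on `X`–`Y` separators. -/
def SepLT (G : SimpleGraph V) (Y K1 K2 : Set V) : Prop :=
  NR G Y K1 ⊆ NR G Y K2 ∧ NR G Y K1 ≠ NR G Y K2

/-- A minimal `X`–`Y` separator: no proper subset is an `X`–`Y` separator. -/
def IsMinimalSeparator (G : SimpleGraph V) (X Y K : Set V) : Prop :=
  IsSeparator G X Y K ∧ ∀ K' ⊂ K, ¬ IsSeparator G X Y K'

/-- An important `X`–`Y` separator: a minimal separator `K` such that there is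
no separator `K'` with `K < K'` and `|K'| ≤ |K|`. -/
def IsImportantSeparator (G : SimpleGraph V) (X Y K : Set V) : Prop :=
  IsMinimalSeparator G X Y K ∧
  ¬ ∃ K', IsSeparator G X Y K' ∧ SepLT G Y K K' ∧ K'.ncard ≤ K.ncard

/-- The minimum size of an `X`–`Y` separator of `G`. -/
noncomputable def minSepSize (G : SimpleGraph V) (X Y : Set V) : ℕ :=
  sInf {n | ∃ K, IsSeparator G X Y K ∧ K.ncard = n}

/-- The excess of a separator: its size minus the minimum separator size. -/
noncomputable def excess (G : SimpleGraph V) (X Y K : Set V) : ℕ :=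
  K.ncard - minSepSize G X Y

/-- The graph `Pr(G,X,Y,K)`: the vertices `NR(G,Y,K) \ X` are deleted (here:
made isolated), and every vertex of `X` is made adjacent to every vertex of `K`. -/
def PrGraph (G : SimpleGraph V) (X Y K : Set V) : SimpleGraph V where
  Adj u v := u ≠ v ∧ u ∉ NR G Y K \ X ∧ v ∉ NR G Y K \ X ∧
    (G.Adj u v ∨ (u ∈ X ∧ v ∈ K) ∨ (u ∈ K ∧ v ∈ X))
  symm := by
    constructor
    rintro u v ⟨h1, h2, h3, h4⟩
    refine ⟨h1.symm, h3, h2, ?_⟩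
    rcases h4 with h | h | h
    · exact Or.inl h.symm
    · exact Or.inr (Or.inr ⟨h.2, h.1⟩)
    · exact Or.inr (Or.inl ⟨h.2, h.1⟩)
  loopless := by constructor; rintro v ⟨h1, -⟩; exact h1 rfl

/-- `NSet G X` is `N(X)`: the set of vertices outside `X` adjacent to a vertex of `X`. -/
def NSet (G : SimpleGraph V) (X : Set V) : Set V :=
  {v | v ∉ X ∧ ∃ x ∈ X, G.Adj x v}

/-- `G` is `X`–`Y` normalized: `N(X)` is an `X`–`Y` separator and is
the unique smallest `X`–`Y` separator. -/
def Normalized (G : SimpleGraph V) (X Y : Set V) : Prop :=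
  IsSeparator G X Y (NSet G X) ∧
  ∀ K, IsSeparator G X Y K → K ≠ NSet G X → (NSet G X).ncard < K.ncard

/-- The cover excess `CE(S)`: the minimum excess of an `X`–`Y` separator disjoint from `S`. -/
noncomputable def CE (G : SimpleGraph V) (X Y S : Set V) : ℕ :=
  sInf {n | ∃ K, IsSeparator G X Y K ∧ Disjoint K S ∧ excess G X Y K = n}

/-- A witness of `S`: an `X`–`Y` separator disjoint from `S` whose excess equals `CE(S)`. -/
noncomputable def IsWitness (G : SimpleGraph V) (X Y S K : Set V) : Prop :=
  IsSeparator G X Y K ∧ Disjoint K S ∧ excess G X Y K = CE G X Y S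

/-- An important witness of `S`: a witness of `S` that is an important `X`–`Y` separator. -/
noncomputable def IsImportantWitness (G : SimpleGraph V) (X Y S K : Set V) : Prop :=
  IsWitness G X Y S K ∧ IsImportantSeparator G X Y K

/-!
An important separator `K` of excess `d > 0` is not of minimum size, so it is not the unique
important separator of minimum size `Kₘ` (which dominates every minimum separator, by
submodularity of `|N(·)|`). Since `Kₘ ≤ K` and `Kₘ` is minimal, some `z ∈ Kₘ \ K` lies on the
`X`-side of `K`; adding `z` to `X` keeps `K` important but raises the minimum separator size,
because every minimum separator avoiding `z` has `z` on its `Y`-side. After at most `d` such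
steps `K` becomes the important separator of minimum size for `(X ∪ S, Y)` with `|S| ≤ d`, so
`K ↦ S` is injective and the count is bounded by the number of sets of at most `k` vertices.
-/

open SimpleGraph Set

section Reach

variable {G : SimpleGraph V} {A B K P X Y : Set V} {u v : V}

theorem mem_reach_of_mem (ha : v ∈ A) (hb : v ∉ B) : v ∈ Reach G A B :=
  ⟨v, ha, Walk.nil, by simpa using hb⟩

theorem mem_reach_of_adj (hu : u ∈ Reach G A B) (huv : G.Adj u v) (hv : v ∉ B) :
    v ∈ Reach G A B := by
  obtain ⟨a, ha, w, hw⟩ := hu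
  refine ⟨a, ha, w.concat huv, fun x hx => ?_⟩
  rw [Walk.support_concat, List.mem_append, List.mem_singleton] at hx
  rcases hx with hx | rfl
  · exact hw x hx
  · exact hv

theorem reach_subset_of_closed (hbase : ∀ a ∈ A, a ∉ B → a ∈ P)
    (hstep : ∀ ⦃u v⦄, u ∈ P → G.Adj u v → v ∉ B → v ∈ P) : Reach G A B ⊆ P := by
  have key : ∀ {u v} (w : G.Walk u v), u ∈ P → (∀ x ∈ w.support, x ∉ B) → v ∈ P := by
    intro u v w
    induction w with
    | nil => exact fun hu _ => hu
    | cons h p ih =>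
      exact fun hu hp => ih (hstep hu h (hp _ (by simp))) fun x hx => hp x (by simp [hx])
  rintro v ⟨a, ha, w, hw⟩
  exact key w (hbase a ha (hw a w.start_mem_support)) hw

theorem mem_NR_iff : v ∈ NR G A B ↔ v ∉ B ∧ v ∉ Reach G A B := Iff.rfl

theorem isSeparator_iff : IsSeparator G X Y K ↔ Disjoint K Y ∧ X ⊆ NR G Y K := by
  constructor
  · rintro ⟨hK, hwalk⟩
    refine ⟨Set.disjoint_left.2 fun v hv hvY => hK hv (Or.inr hvY),
      fun x hx => ⟨fun hxK => hK hxK (Or.inl hx), ?_⟩⟩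
    rintro ⟨y, hy, w, hw⟩
    obtain ⟨v, hv, hvK⟩ := hwalk x hx y hy w.reverse
    exact hw v (by simpa using hv) hvK
  · rintro ⟨hKY, hX⟩
    refine ⟨fun v hv hvXY => ?_, fun x hx y hy w => ?_⟩
    · rcases hvXY with hvX | hvY
      · exact (hX hvX).1 hv
      · exact Set.disjoint_left.1 hKY hv hvY
    · by_contra! hw
      exact (hX hx).2 ⟨y, hy, w.reverse, fun v hv => hw v (by simpa using hv)⟩

theorem IsSeparator.subset_NR (h : IsSeparator G X Y K) : X ⊆ NR G Y K :=
  (isSeparator_iff.1 h).2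

theorem IsSeparator.subset_reach (h : IsSeparator G X Y K) : Y ⊆ Reach G Y K :=
  fun _ hy => mem_reach_of_mem hy fun hyK => Set.disjoint_left.1 (isSeparator_iff.1 h).1 hyK hy

theorem IsSeparator.of_sepLE {K' : Set V} (h : IsSeparator G X Y K) (hle : SepLE G Y K K')
    (hK'Y : Disjoint K' Y) : IsSeparator G X Y K' :=
  isSeparator_iff.2 ⟨hK'Y, h.subset_NR.trans hle⟩

theorem IsSeparator.mono_left {X' : Set V} (h : IsSeparator G X' Y K) (hX : X ⊆ X') :
    IsSeparator G X Y K := by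
  rw [isSeparator_iff] at h ⊢
  exact ⟨h.1, hX.trans h.2⟩

end Reach

section Boundary

variable {G : SimpleGraph V} {K P R X Y : Set V}

theorem disjoint_NSet_of_subset (hY : Y ⊆ R) : Disjoint (NSet G R) Y :=
  Set.disjoint_left.2 fun _ hv hvY => hv.1 (hY hvY)

theorem reach_NSet_subset (hY : Y ⊆ R) : Reach G Y (NSet G R) ⊆ R :=
  reach_subset_of_closed (fun _ ha _ => hY ha) fun _ _ hu huv hv => by
    by_contra hvR
    exact hv ⟨hvR, _, hu, huv⟩

theorem NSet_subset_of_subset_reach (hR : R ⊆ Reach G Y K) : NSet G R ⊆ K ∪ Reach G Y K := by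
  rintro v ⟨-, u, hu, huv⟩
  by_cases hvK : v ∈ K
  · exact Or.inl hvK
  · exact Or.inr (mem_reach_of_adj (hR hu) huv hvK)

theorem NSet_reach_subset : NSet G (Reach G Y K) ⊆ K := fun _ hv =>
  (NSet_subset_of_subset_reach subset_rfl hv).resolve_right hv.1

theorem sepLE_NSet (hY : Y ⊆ R) (hR : R ⊆ Reach G Y K) : SepLE G Y K (NSet G R) := by
  intro v hv
  rw [mem_NR_iff] at hv ⊢
  refine ⟨fun hvN => ?_, fun hvR => hv.2 (hR (reach_NSet_subset hY hvR))⟩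
  rcases NSet_subset_of_subset_reach hR hvN with h | h
  exacts [hv.1 h, hv.2 h]

theorem ncard_NSet_union_add_ncard_NSet_inter_le [Finite V] (R₁ R₂ : Set V) :
    (NSet G (R₁ ∪ R₂)).ncard + (NSet G (R₁ ∩ R₂)).ncard ≤
      (NSet G R₁).ncard + (NSet G R₂).ncard := by
  have hunion : NSet G (R₁ ∪ R₂) ∪ NSet G (R₁ ∩ R₂) ⊆ NSet G R₁ ∪ NSet G R₂ := by
    rintro v (⟨hv, u, hu | hu, huv⟩ | ⟨hv, u, hu, huv⟩)
    · exact Or.inl ⟨fun h => hv (Or.inl h), u, hu, huv⟩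
    · exact Or.inr ⟨fun h => hv (Or.inr h), u, hu, huv⟩
    · by_cases hv₁ : v ∈ R₁
      · exact Or.inr ⟨fun hv₂ => hv ⟨hv₁, hv₂⟩, u, hu.2, huv⟩
      · exact Or.inl ⟨hv₁, u, hu.1, huv⟩
  have hinter : NSet G (R₁ ∪ R₂) ∩ NSet G (R₁ ∩ R₂) ⊆ NSet G R₁ ∩ NSet G R₂ := by
    rintro v ⟨⟨hv, -⟩, -, u, hu, huv⟩
    exact ⟨⟨fun h => hv (Or.inl h), u, hu.1, huv⟩, ⟨fun h => hv (Or.inr h), u, hu.2, huv⟩⟩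
  rw [← Set.ncard_union_add_ncard_inter, ← Set.ncard_union_add_ncard_inter (NSet G R₁)]
  exact add_le_add (Set.ncard_le_ncard hunion) (Set.ncard_le_ncard hinter)

theorem IsSeparator.NSet_reach_union (hK : IsSeparator G X Y K) (hP : IsSeparator G X Y P) :
    IsSeparator G X Y (NSet G (Reach G Y K ∪ Reach G Y P)) := by
  have hY : Y ⊆ Reach G Y K ∪ Reach G Y P := hK.subset_reach.trans subset_union_left
  refine isSeparator_iff.2 ⟨disjoint_NSet_of_subset hY, fun x hx => ⟨fun hxN => ?_, fun hxR => ?_⟩⟩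
  · obtain ⟨hxR, u, hu, hux⟩ := hxN
    rcases hu with hu | hu
    · exact hxR (Or.inl (mem_reach_of_adj hu hux (hK.subset_NR hx).1))
    · exact hxR (Or.inr (mem_reach_of_adj hu hux (hP.subset_NR hx).1))
  · rcases reach_NSet_subset hY hxR with h | h
    exacts [(hK.subset_NR hx).2 h, (hP.subset_NR hx).2 h]

theorem ncard_NSet_reach_union_add_ncard_NSet_reach_inter_le [Finite V] :
    (NSet G (Reach G Y K ∪ Reach G Y P)).ncard + (NSet G (Reach G Y K ∩ Reach G Y P)).ncard ≤
      K.ncard + P.ncard :=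
  (ncard_NSet_union_add_ncard_NSet_inter_le _ _).trans
    (add_le_add (Set.ncard_le_ncard NSet_reach_subset) (Set.ncard_le_ncard NSet_reach_subset))

end Boundary

section Minimal

variable {G : SimpleGraph V} {K K' X Y : Set V} {v : V}

theorem IsMinimalSeparator.exists_adj_mem_NR (hK : IsMinimalSeparator G X Y K) (hv : v ∈ K) :
    ∃ t, G.Adj v t ∧ t ∈ NR G Y K := by
  by_contra! h
  have hsub : Reach G Y (K \ {v}) ⊆ insert v (Reach G Y K) := by
    refine reach_subset_of_closed (fun a ha haK => ?_) fun u w hu huw hw => ?_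
    · by_cases hav : a = v
      · exact Or.inl hav
      · exact Or.inr (mem_reach_of_mem ha fun haK' => haK ⟨haK', hav⟩)
    · by_cases hwv : w = v
      · exact Or.inl hwv
      have hwK : w ∉ K := fun hwK => hw ⟨hwK, hwv⟩
      rcases hu with rfl | hu
      · by_contra hwR
        exact h w huw ⟨hwK, fun hw' => hwR (Or.inr hw')⟩
      · exact Or.inr (mem_reach_of_adj hu huw hwK)
  refine hK.2 (K \ {v}) (Set.sdiff_singleton_ssubset.2 hv) (isSeparator_iff.2 ⟨?_, ?_⟩)
  · exact (isSeparator_iff.1 hK.1).1.mono_left sdiff_subset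
  · intro x hx
    obtain ⟨hxK, hxR⟩ := hK.1.subset_NR hx
    have hxv : x ≠ v := fun hxv => hxK (hxv ▸ hv)
    exact ⟨fun hx' => hxK hx'.1, fun hx' => (hsub hx').elim hxv hxR⟩

theorem IsMinimalSeparator.disjoint_reach_of_sepLE (hK : IsMinimalSeparator G X Y K)
    (hle : SepLE G Y K K') : Disjoint K (Reach G Y K') := by
  refine Set.disjoint_left.2 fun v hv hvR => ?_
  obtain ⟨t, hvt, ht⟩ := hK.exists_adj_mem_NR hv
  have ht' := hle ht
  exact ht'.2 (mem_reach_of_adj hvR hvt ht'.1)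

theorem IsMinimalSeparator.subset_of_NR_eq (hK : IsMinimalSeparator G X Y K)
    (hNR : NR G Y K = NR G Y K') : K ⊆ K' := by
  intro v hv
  have hv' : v ∉ NR G Y K' := hNR ▸ fun h => h.1 hv
  by_contra hvK'
  exact hv' ⟨hvK', Set.disjoint_left.1 (hK.disjoint_reach_of_sepLE hNR.subset) hv⟩

theorem IsMinimalSeparator.eq_of_NR_eq (hK : IsMinimalSeparator G X Y K)
    (hK' : IsMinimalSeparator G X Y K') (hNR : NR G Y K = NR G Y K') : K = K' :=
  (hK.subset_of_NR_eq hNR).antisymm (hK'.subset_of_NR_eq hNR.symm)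

end Minimal

section MinimumSize

variable {G : SimpleGraph V} {K P X X' Y : Set V}

theorem minSepSize_le (h : IsSeparator G X Y K) : minSepSize G X Y ≤ K.ncard :=
  Nat.sInf_le ⟨K, h, rfl⟩

theorem exists_ncard_eq_minSepSize (h : IsSeparator G X Y K) :
    ∃ P, IsSeparator G X Y P ∧ P.ncard = minSepSize G X Y :=
  Nat.sInf_mem (⟨K.ncard, K, h, rfl⟩ : {n | ∃ P, IsSeparator G X Y P ∧ P.ncard = n}.Nonempty)

theorem IsSeparator.isMinimalSeparator_of_ncard_eq [Finite V] (h : IsSeparator G X Y K)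
    (hc : K.ncard = minSepSize G X Y) : IsMinimalSeparator G X Y K :=
  ⟨h, fun _ hK' hsep => (Set.ncard_lt_ncard hK').not_ge (hc ▸ minSepSize_le hsep)⟩

/-- The boundary of the intersection of the `Y`-sides of `K` and `P` dominates both, and by
submodularity it is no larger than `K`. -/
theorem IsImportantSeparator.sepLE_of_ncard_eq [Finite V] (hK : IsImportantSeparator G X Y K)
    (hP : IsSeparator G X Y P) (hPc : P.ncard = minSepSize G X Y) : SepLE G Y P K := by
  have hKs := hK.1.1
  set J := NSet G (Reach G Y K ∩ Reach G Y P)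
  have hY : Y ⊆ Reach G Y K ∩ Reach G Y P := subset_inter hKs.subset_reach hP.subset_reach
  have hKJ : SepLE G Y K J := sepLE_NSet hY inter_subset_left
  have hJ : IsSeparator G X Y J := hKs.of_sepLE hKJ (disjoint_NSet_of_subset hY)
  have hJc : J.ncard ≤ K.ncard := by
    have hM := minSepSize_le (hKs.NSet_reach_union hP)
    have hsub : (NSet G (Reach G Y K ∪ Reach G Y P)).ncard + J.ncard ≤ K.ncard + P.ncard :=
      ncard_NSet_reach_union_add_ncard_NSet_reach_inter_le
    omega
  have hNR : NR G Y K = NR G Y J := by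
    by_contra hne
    exact hK.2 ⟨J, hJ, ⟨hKJ, hne⟩, hJc⟩
  rw [SepLE, hNR]
  exact sepLE_NSet hY inter_subset_right

theorem exists_isImportantSeparator_ncard_eq [Finite V] (h : IsSeparator G X Y K) :
    ∃ Kₘ, IsImportantSeparator G X Y Kₘ ∧ Kₘ.ncard = minSepSize G X Y := by
  obtain ⟨Kₘ, ⟨hKₘ, hKₘc⟩, hmax⟩ := Set.exists_max_image
    {P | IsSeparator G X Y P ∧ P.ncard = minSepSize G X Y} (fun P => (NR G Y P).ncard)
    (Set.toFinite _) (exists_ncard_eq_minSepSize h)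
  refine ⟨Kₘ, ⟨hKₘ.isMinimalSeparator_of_ncard_eq hKₘc, ?_⟩, hKₘc⟩
  rintro ⟨K', hK', ⟨hsub, hne⟩, hc⟩
  have hK'c : K'.ncard = minSepSize G X Y := le_antisymm (hKₘc ▸ hc) (minSepSize_le hK')
  exact (Set.ncard_lt_ncard (ssubset_of_subset_of_ne hsub hne)).not_ge (hmax K' ⟨hK', hK'c⟩)

theorem IsImportantSeparator.eq_of_ncard_eq [Finite V] (hK : IsImportantSeparator G X Y K)
    (hP : IsImportantSeparator G X Y P) (hKc : K.ncard = minSepSize G X Y)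
    (hPc : P.ncard = minSepSize G X Y) : K = P :=
  hK.1.eq_of_NR_eq hP.1
    ((hP.sepLE_of_ncard_eq hK.1.1 hKc).antisymm (hK.sepLE_of_ncard_eq hP.1.1 hPc))

theorem IsImportantSeparator.mono_left (hK : IsImportantSeparator G X Y K) (hX : X ⊆ X')
    (hK' : IsSeparator G X' Y K) : IsImportantSeparator G X' Y K :=
  ⟨⟨hK', fun K' hK'K hsep => hK.1.2 K' hK'K (hsep.mono_left hX)⟩,
    fun ⟨K', hK'sep, hlt, hc⟩ => hK.2 ⟨K', hK'sep.mono_left hX, hlt, hc⟩⟩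

end MinimumSize

section Augment

variable {G : SimpleGraph V} {K X Y : Set V}

/-- Take `z ∈ Kₘ \ K` for the important minimum separator `Kₘ ≤ K`. `K` still separates
`insert z X` since `z` is not on its `Y`-side, while every minimum separator `W` of `(X, Y)`
avoiding `z` has `z` on its `Y`-side, because `W ≤ Kₘ`. -/
theorem IsImportantSeparator.exists_minSepSize_lt [Finite V] (hK : IsImportantSeparator G X Y K)
    (hgt : minSepSize G X Y < K.ncard) :
    ∃ z, IsImportantSeparator G (insert z X) Y K ∧
      minSepSize G X Y < minSepSize G (insert z X) Y := by
  obtain ⟨Kₘ, hKₘ, hKₘc⟩ := exists_isImportantSeparator_ncard_eq hK.1.1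
  have hKₘK : SepLE G Y Kₘ K := hK.sepLE_of_ncard_eq hKₘ.1.1 hKₘc
  obtain ⟨z, hzKₘ, hzK⟩ : (Kₘ \ K).Nonempty := by
    rw [Set.sdiff_nonempty]
    intro hsub
    exact hK.1.2 Kₘ (ssubset_of_subset_of_ne hsub (by rintro rfl; omega)) hKₘ.1.1
  have hzR : z ∉ Reach G Y K := Set.disjoint_left.1 (hKₘ.1.disjoint_reach_of_sepLE hKₘK) hzKₘ
  have hsep : IsSeparator G (insert z X) Y K :=
    isSeparator_iff.2 ⟨(isSeparator_iff.1 hK.1.1).1,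
      Set.insert_subset ⟨hzK, hzR⟩ hK.1.1.subset_NR⟩
  refine ⟨z, hK.mono_left (subset_insert z X) hsep, ?_⟩
  obtain ⟨W, hW, hWc⟩ := exists_ncard_eq_minSepSize hsep
  rw [← hWc]
  refine (minSepSize_le (hW.mono_left (subset_insert z X))).lt_of_ne fun hWc' => ?_
  have hzW : z ∈ NR G Y W := hW.subset_NR (mem_insert z X)
  exact (hKₘ.sepLE_of_ncard_eq (hW.mono_left (subset_insert z X)) hWc'.symm hzW).1 hzKₘ

theorem IsImportantSeparator.exists_union_ncard_eq_minSepSize [Finite V] (d : ℕ)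
    (hK : IsImportantSeparator G X Y K) (hd : K.ncard ≤ minSepSize G X Y + d) :
    ∃ S : Set V, S.ncard ≤ d ∧ IsImportantSeparator G (X ∪ S) Y K ∧
      K.ncard = minSepSize G (X ∪ S) Y := by
  induction d generalizing X with
  | zero =>
    exact ⟨∅, by simp, by simpa using hK, by simpa using le_antisymm hd (minSepSize_le hK.1.1)⟩
  | succ d ih =>
    rcases (minSepSize_le hK.1.1).eq_or_lt with heq | hgt
    · exact ⟨∅, by simp, by simpa using hK, by simpa using heq.symm⟩
    obtain ⟨z, hKz, hlt⟩ := hK.exists_minSepSize_lt hgt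
    obtain ⟨S, hS, hKS, hKSc⟩ := ih hKz (by omega)
    refine ⟨insert z S, (Set.ncard_insert_le z S).trans (by omega), ?_⟩
    rw [union_insert, ← insert_union]
    exact ⟨hKS, hKSc⟩

end Augment

theorem ncard_setOf_ncard_le_le_sum_choose [Fintype V] (k : ℕ) :
    {S : Set V | S.ncard ≤ k}.ncard ≤ ∑ i ∈ Finset.range (k + 1), (Fintype.card V).choose i := by
  classical
  calc {S : Set V | S.ncard ≤ k}.ncard
      ≤ ((Finset.range (k + 1)).biUnion fun i => (Finset.univ : Finset V).powersetCard i).card := by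
        rw [← Set.ncard_coe_finset]
        refine Set.ncard_le_ncard_of_injOn (fun S : Set V => S.toFinset) (fun S hS => ?_)
          (fun S₁ _ S₂ _ h => Set.toFinset_inj.1 h)
        simp only [Finset.coe_biUnion, Finset.coe_range, mem_iUnion, Finset.mem_coe,
          Finset.mem_powersetCard, Finset.subset_univ, true_and, mem_Iio, exists_prop]
        exact ⟨_, Nat.lt_succ_of_le ((Set.ncard_eq_toFinset_card' S) ▸ hS), rfl⟩
    _ ≤ ∑ i ∈ Finset.range (k + 1), ((Finset.univ : Finset V).powersetCard i).card :=
        Finset.card_biUnion_le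
    _ = ∑ i ∈ Finset.range (k + 1), (Fintype.card V).choose i := by
        simp only [Finset.card_powersetCard, Finset.card_univ]

theorem card_important_separators_le_general
    {V : Type*} [Fintype V] (G : SimpleGraph V) (X Y : Set V)
    (k : ℕ) :
    {K : Set V | IsImportantSeparator G X Y K ∧ excess G X Y K ≤ k}.ncard ≤
      ∑ i ∈ Finset.range (k + 1), Nat.choose (Fintype.card V) i := by
  have hS : ∀ K ∈ {K : Set V | IsImportantSeparator G X Y K ∧ excess G X Y K ≤ k},
      ∃ S : Set V, S.ncard ≤ k ∧ IsImportantSeparator G (X ∪ S) Y K ∧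
        K.ncard = minSepSize G (X ∪ S) Y := by
    rintro K ⟨hK, hexc⟩
    exact hK.exists_union_ncard_eq_minSepSize k (by rw [excess] at hexc; omega)
  choose! S hSk hSimp hSmin using hS
  calc {K : Set V | IsImportantSeparator G X Y K ∧ excess G X Y K ≤ k}.ncard
      ≤ {S : Set V | S.ncard ≤ k}.ncard :=
        Set.ncard_le_ncard_of_injOn S hSk (fun K₁ h₁ K₂ h₂ h =>
          (hSimp K₁ h₁).eq_of_ncard_eq (h ▸ hSimp K₂ h₂) (hSmin K₁ h₁) (h ▸ hSmin K₂ h₂))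
    _ ≤ ∑ i ∈ Finset.range (k + 1), Nat.choose (Fintype.card V) i :=
        ncard_setOf_ncard_le_le_sum_choose k

/-- Let `G` be a graph on `n` vertices, `X`, `Y` disjoint
subsets of `V(G)` such that at least one `X`–`Y` separator exists, and `k > 0`
an integer.  Then the number of important `X`–`Y` separators of `G` of excess
at most `k` is at most `∑_{i=0}^{k} C(n,i)`. -/
theorem card_important_separators_le
    {V : Type*} [Fintype V] (G : SimpleGraph V) (X Y : Set V)
    (hXY : Disjoint X Y) (hex : ∃ K, IsSeparator G X Y K)
    (k : ℕ) (hk : 0 < k) :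
    {K : Set V | IsImportantSeparator G X Y K ∧ excess G X Y K ≤ k}.ncard ≤
      ∑ i ∈ Finset.range (k + 1), Nat.choose (Fintype.card V) i :=
  card_important_separators_le_general G X Y k
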